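/- arXiv:1804.04851 — 6 statements merged into one kernel-verified Lean document; each statement's English description precedes it below -/
import Mathlib

section
/- Let A and B be complex r×r matrices. Then Re Tr(AB) ≤ ∑_{k=1}^r σ_k(A) σ_k(B), where σ_k denotes the k-th largest singular value. -/
/-!
Take singular value decompositions `A = U₁ Σ_A W₁ᴴ`, `B = U₂ Σ_B W₂ᴴ` with the singular values in
decreasing order. Then `Tr(AB) = Tr(Σ_A P Σ_B Q)` with `P = W₁ᴴ U₂` and `Q = W₂ᴴ U₁` unitary, and
AM–GM gives `Re Tr(AB) ≤ ∑ᵢⱼ σᵢ(A) σⱼ(B) Sᵢⱼ` for the doubly stochastic matrix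
`Sᵢⱼ = (|Pᵢⱼ|² + |Qⱼᵢ|²) / 2`. By Birkhoff's theorem this bound is a convex combination of the sums
`∑ᵢ σᵢ(A) σ_{π i}(B)` over permutations `π`, each of which is at most `∑ᵢ σᵢ(A) σᵢ(B)` by the
rearrangement inequality.
-/

open Finset

/-- The singular values of a square complex matrix, arranged in decreasing order:
the square roots of the eigenvalues of `Mᴴ * M`, sorted decreasingly. -/
noncomputable def singularValuesDesc {r : ℕ} (M : Matrix (Fin r) (Fin r) ℂ) : Fin r → ℝ :=
  (fun k => Real.sqrt ((Matrix.isHermitian_conjTranspose_mul_self M).eigenvalues k)) ∘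
    Tuple.sort fun k =>
      -Real.sqrt ((Matrix.isHermitian_conjTranspose_mul_self M).eigenvalues k)

open Matrix

theorem RCLike.re_mul_le_add_norm_sq_div_two {𝕜 : Type*} [RCLike 𝕜] (z w : 𝕜) :
    re (z * w) ≤ (‖z‖ ^ 2 + ‖w‖ ^ 2) / 2 := by
  have := two_mul_le_add_sq ‖z‖ ‖w‖
  calc re (z * w) ≤ ‖z * w‖ := re_le_norm _
    _ = ‖z‖ * ‖w‖ := norm_mul z w
    _ ≤ (‖z‖ ^ 2 + ‖w‖ ^ 2) / 2 := by linarith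

section

variable {n : Type*} [Fintype n] [DecidableEq n]

theorem Monovary.dotProduct_mulVec_le_of_mem_doublyStochastic {R : Type*} [Field R]
    [LinearOrder R] [IsStrictOrderedRing R] {f g : n → R} (hfg : Monovary f g)
    {M : Matrix n n R} (hM : M ∈ doublyStochastic R n) :
    f ⬝ᵥ (M *ᵥ g) ≤ f ⬝ᵥ g := by
  obtain ⟨w, hw₀, hw₁, rfl⟩ := exists_eq_sum_perm_of_mem_doublyStochastic hM
  calc f ⬝ᵥ ((∑ σ, w σ • σ.permMatrix R) *ᵥ g) = ∑ σ, w σ * ∑ i, f i * g (σ i) := by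
        simp only [sum_mulVec, smul_mulVec, permMatrix_mulVec, dotProduct_sum, dotProduct_smul,
          smul_eq_mul]
        rfl
    _ ≤ ∑ σ, w σ * ∑ i, f i * g i :=
        sum_le_sum fun σ _ => mul_le_mul_of_nonneg_left hfg.sum_mul_comp_perm_le_sum_mul (hw₀ σ)
    _ = f ⬝ᵥ g := by rw [← sum_mul, hw₁, one_mul]; rfl

variable {𝕜 : Type*} [RCLike 𝕜]

namespace Matrix

theorem sum_norm_sq_row_of_mem_unitaryGroup {U : Matrix n n 𝕜} (hU : U ∈ unitaryGroup n 𝕜)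
    (i : n) : ∑ j, ‖U i j‖ ^ 2 = 1 := by
  have h := congr_fun₂ (mem_unitaryGroup_iff.mp hU) i i
  simp only [mul_apply, star_apply, RCLike.star_def, RCLike.mul_conj, one_apply_eq] at h
  exact_mod_cast h

theorem map_norm_sq_mem_doublyStochastic {U : Matrix n n 𝕜} (hU : U ∈ unitaryGroup n 𝕜) :
    U.map (‖·‖ ^ 2) ∈ doublyStochastic ℝ n := by
  refine mem_doublyStochastic_iff_sum.mpr ⟨fun i j => sq_nonneg _,
    sum_norm_sq_row_of_mem_unitaryGroup hU, fun j => ?_⟩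
  simpa using sum_norm_sq_row_of_mem_unitaryGroup (Unitary.star_mem hU) j

theorem re_trace_diagonal_mul_mul_diagonal_mul_le {a b : n → ℝ} (ha : 0 ≤ a) (hb : 0 ≤ b)
    (hab : Monovary a b) {P Q : Matrix n n 𝕜} (hP : P ∈ unitaryGroup n 𝕜)
    (hQ : Q ∈ unitaryGroup n 𝕜) :
    RCLike.re (diagonal (fun i => (a i : 𝕜)) * P * diagonal (fun j => (b j : 𝕜)) * Q).trace
      ≤ ∑ i, a i * b i := by
  set S : Matrix n n ℝ := (1 / 2 : ℝ) • P.map (‖·‖ ^ 2) + (1 / 2 : ℝ) • (Q.map (‖·‖ ^ 2))ᵀ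
  have hS : S ∈ doublyStochastic ℝ n :=
    convex_doublyStochastic (map_norm_sq_mem_doublyStochastic hP)
      (transpose_mem_doublyStochastic_iff.mpr (map_norm_sq_mem_doublyStochastic hQ))
      (by norm_num) (by norm_num) (by norm_num)
  calc RCLike.re (diagonal (fun i => (a i : 𝕜)) * P * diagonal (fun j => (b j : 𝕜)) * Q).trace
      = ∑ i, ∑ j, a i * b j * RCLike.re (P i j * Q j i) := by
        simp only [trace, Matrix.diag, mul_apply (M := _ * _ * diagonal _), mul_diagonal,
          diagonal_mul, map_sum]
        refine sum_congr rfl fun i _ => sum_congr rfl fun j _ => ?_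
        rw [← RCLike.re_ofReal_mul]
        push_cast
        ring_nf
    _ ≤ ∑ i, ∑ j, a i * b j * S i j := by
        gcongr with i _ j _
        · exact mul_nonneg (ha i) (hb j)
        · simp only [S, Matrix.add_apply, Matrix.smul_apply, map_apply, transpose_apply,
            smul_eq_mul]
          linarith [RCLike.re_mul_le_add_norm_sq_div_two (P i j) (Q j i)]
    _ = a ⬝ᵥ (S *ᵥ b) := by
        simp only [dotProduct, mulVec, mul_sum]
        exact sum_congr rfl fun i _ => sum_congr rfl fun j _ => by ring
    _ ≤ a ⬝ᵥ b := hab.dotProduct_mulVec_le_of_mem_doublyStochastic hS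

theorem exists_unitary_mul_diagonal_of_conjTranspose_mul_self_eq_diagonal
    {C : Matrix n n 𝕜} {d : n → ℝ} (hC : Cᴴ * C = diagonal fun i => ((d i ^ 2 : ℝ) : 𝕜)) :
    ∃ U ∈ unitaryGroup n 𝕜, C = U * diagonal fun i => (d i : 𝕜) := by
  -- Normalise the nonzero columns and extend them to an orthonormal basis; the columns with
  -- `d j = 0` vanish, so any basis vector serves there.
  set col : n → EuclideanSpace 𝕜 n := fun j => WithLp.toLp 2 (Cᵀ j)
  have hcol (j k : n) : inner 𝕜 (col j) (col k) = if j = k then ((d j ^ 2 : ℝ) : 𝕜) else 0 := by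
    rw [EuclideanSpace.inner_toLp_toLp, dotProduct_comm]
    exact (congr_fun₂ hC j k).trans (diagonal_apply _ _ _)
  set s : Set n := {j | d j ≠ 0}
  have hs : Orthonormal 𝕜 (s.domRestrict fun j => (d j : 𝕜)⁻¹ • col j) := by
    rw [orthonormal_iff_ite]
    rintro ⟨j, hj⟩ ⟨k, hk⟩
    simp only [Set.domRestrict_apply, inner_smul_left, inner_smul_right, hcol, Subtype.mk.injEq]
    split_ifs with hjk
    · subst hjk
      have : (d j : 𝕜) ≠ 0 := by exact_mod_cast hj
      simp only [RCLike.conj_inv, RCLike.conj_ofReal]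
      push_cast
      field_simp
    · simp
  obtain ⟨b, hb⟩ := hs.exists_orthonormalBasis_extension_of_card_eq (by simp)
  refine ⟨(EuclideanSpace.basisFun n 𝕜).toBasis.toMatrix b.toBasis,
    (EuclideanSpace.basisFun n 𝕜).toMatrix_orthonormalBasis_mem_unitary b, ?_⟩
  ext i j
  rw [mul_diagonal]
  change C i j = b j i * d j
  by_cases hj : d j = 0
  · have : col j = 0 := inner_self_eq_zero.mp (by rw [hcol, if_pos rfl, hj]; simp)
    simpa [col, hj] using congr_arg (· i) this
  · have : (d j : 𝕜) ≠ 0 := by exact_mod_cast hj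
    rw [hb j hj]
    simp only [PiLp.smul_apply, transpose_apply, smul_eq_mul, col]
    field_simp

theorem submatrix_id_mem_unitaryGroup {V : Matrix n n 𝕜} (hV : V ∈ unitaryGroup n 𝕜)
    (e : n ≃ n) : V.submatrix id e ∈ unitaryGroup n 𝕜 := by
  rw [mem_unitaryGroup_iff', star_eq_conjTranspose, conjTranspose_submatrix,
    ← submatrix_mul _ _ _ _ _ Function.bijective_id, ← star_eq_conjTranspose,
    mem_unitaryGroup_iff'.mp hV, submatrix_one_equiv]

end Matrix

end

theorem singularValuesDesc_nonneg {r : ℕ} (M : Matrix (Fin r) (Fin r) ℂ) :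
    0 ≤ singularValuesDesc M :=
  fun _ => Real.sqrt_nonneg _

theorem singularValuesDesc_antitone {r : ℕ} (M : Matrix (Fin r) (Fin r) ℂ) :
    Antitone (singularValuesDesc M) :=
  fun _ _ hij => neg_le_neg_iff.mp (Tuple.monotone_sort
    (fun k => -Real.sqrt ((isHermitian_conjTranspose_mul_self M).eigenvalues k)) hij)

theorem exists_unitary_mul_diagonal_singularValuesDesc_mul_conjTranspose {r : ℕ}
    (M : Matrix (Fin r) (Fin r) ℂ) :
    ∃ U ∈ unitaryGroup (Fin r) ℂ, ∃ W ∈ unitaryGroup (Fin r) ℂ,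
      M = U * diagonal (fun k => (singularValuesDesc M k : ℂ)) * Wᴴ := by
  set hH := isHermitian_conjTranspose_mul_self M
  set V : Matrix (Fin r) (Fin r) ℂ := (hH.eigenvectorUnitary : Matrix (Fin r) (Fin r) ℂ)
  set p := Tuple.sort fun k => -Real.sqrt (hH.eigenvalues k)
  set W := V.submatrix id p
  have hW : W ∈ unitaryGroup (Fin r) ℂ := submatrix_id_mem_unitaryGroup hH.eigenvectorUnitary.2 p
  have hspectral : star V * (Mᴴ * M) * V = diagonal (RCLike.ofReal ∘ hH.eigenvalues) := by
    simpa only [Unitary.conjStarAlgAut_apply, Unitary.coe_star, star_star] using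
      hH.conjStarAlgAut_star_eigenvectorUnitary
  have hC : (M * W)ᴴ * (M * W) = diagonal fun k => ((singularValuesDesc M k ^ 2 : ℝ) : ℂ) := by
    calc (M * W)ᴴ * (M * W) = (star V * (Mᴴ * M) * V).submatrix p p := by
          rw [submatrix_mul _ _ _ _ _ Function.bijective_id,
            submatrix_mul _ _ _ _ _ Function.bijective_id, submatrix_id_id, star_eq_conjTranspose,
            ← conjTranspose_submatrix, conjTranspose_mul, Matrix.mul_assoc, Matrix.mul_assoc,
            Matrix.mul_assoc]
      _ = diagonal fun k => ((singularValuesDesc M k ^ 2 : ℝ) : ℂ) := by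
          rw [hspectral, submatrix_diagonal_equiv]
          congr 1
          ext k
          simp [singularValuesDesc, p, Real.sq_sqrt (M.eigenvalues_conjTranspose_mul_self_nonneg _)]
  obtain ⟨U, hU, hMW⟩ := exists_unitary_mul_diagonal_of_conjTranspose_mul_self_eq_diagonal hC
  refine ⟨U, hU, W, hW, ?_⟩
  calc M = M * W * Wᴴ := by
        rw [Matrix.mul_assoc, ← star_eq_conjTranspose, mem_unitaryGroup_iff.mp hW, Matrix.mul_one]
    _ = _ := by rw [hMW]; rfl

/-- von Neumann's trace inequality:
`Re Tr(AB) ≤ ∑ₖ σ_k(A) σ_k(B)` where `σ_k` are the decreasingly sorted singular values. -/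
theorem stmt2 (r : ℕ) (A B : Matrix (Fin r) (Fin r) ℂ) :
    ((A * B).trace).re ≤ ∑ k, singularValuesDesc A k * singularValuesDesc B k := by
  obtain ⟨U₁, hU₁, W₁, hW₁, hA⟩ := exists_unitary_mul_diagonal_singularValuesDesc_mul_conjTranspose A
  obtain ⟨U₂, hU₂, W₂, hW₂, hB⟩ := exists_unitary_mul_diagonal_singularValuesDesc_mul_conjTranspose B
  have htrace : (A * B).trace = (diagonal (fun k => (singularValuesDesc A k : ℂ)) * (W₁ᴴ * U₂) *
      diagonal (fun k => (singularValuesDesc B k : ℂ)) * (W₂ᴴ * U₁)).trace := by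
    conv_lhs => rw [hA, hB]
    simp only [Matrix.mul_assoc]
    rw [trace_mul_comm U₁]
    simp only [Matrix.mul_assoc]
  rw [htrace]
  exact re_trace_diagonal_mul_mul_diagonal_mul_le (singularValuesDesc_nonneg A)
    (singularValuesDesc_nonneg B)
    ((singularValuesDesc_antitone A).monovary (singularValuesDesc_antitone B))
    (mul_mem (Unitary.star_mem hW₁) hU₂) (mul_mem (Unitary.star_mem hW₂) hU₁)
end

section
/- Let Λ, Δ, G₁, G₂ be complex r×r matrices with Λ Hermitian positive semidefinite. Then 2 Re Tr(Λ G₁ Δ Λ G₂) ≤ √r · ‖Δ‖₂ · ‖Λ‖₂² · (Tr(G₁ G₁*) + Tr(G₂ G₂*)), where ‖·‖₂ is the spectral norm. -/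
open Finset
open scoped Matrix ComplexOrder

/-- The spectral (operator) norm of a square complex matrix. -/
noncomputable def specNorm {r : ℕ} (M : Matrix (Fin r) (Fin r) ℂ) : ℝ :=
  ‖Matrix.toEuclideanCLM (𝕜 := ℂ) M‖

/-! Cauchy–Schwarz for the Frobenius inner product gives `Re tr (X * Y) ≤ ‖X‖_F ‖Y‖_F`, and
applying the operator bound column by column gives `‖A * X‖_F ≤ ‖A‖₂ ‖X‖_F`. Splitting
`Λ G₁ Δ Λ G₂ = (Λ G₁) (Δ Λ G₂)`, the left side is at most `2 ‖Δ‖₂ ‖Λ‖₂² ‖G₁‖_F ‖G₂‖_F`, and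
AM-GM finishes; the factor `√r` is at least `1` unless `r = 0`, when both sides vanish. -/

namespace Matrix

attribute [local instance] frobeniusNormedAddCommGroup

variable {𝕜 m n p : Type*} [RCLike 𝕜] [Fintype m] [Fintype n] [Fintype p]

def toRowsL2 (X : Matrix m n 𝕜) : PiLp 2 (fun _ : m => EuclideanSpace 𝕜 n) :=
  WithLp.toLp 2 fun i => WithLp.toLp 2 (X i)

lemma norm_toRowsL2 (X : Matrix m n 𝕜) : ‖toRowsL2 X‖ = ‖X‖ := rfl

lemma frobenius_norm_sq_eq_sum_rows (X : Matrix m n 𝕜) :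
    ‖X‖ ^ 2 = ∑ i, ‖(WithLp.toLp 2 (X i) : EuclideanSpace 𝕜 n)‖ ^ 2 := by
  rw [← norm_toRowsL2, PiLp.norm_sq_eq_of_L2]
  rfl

lemma inner_toRowsL2_conjTranspose (X : Matrix m n 𝕜) (Y : Matrix n m 𝕜) :
    inner 𝕜 (toRowsL2 Xᴴ) (toRowsL2 Y) = (X * Y).trace := by
  simp only [toRowsL2, PiLp.inner_apply, trace, diag_apply, mul_apply]
  rw [Finset.sum_comm]
  simp [RCLike.inner_apply, mul_comm]

lemma frobenius_norm_sq_eq_re_trace_mul_conjTranspose (X : Matrix m n 𝕜) :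
    ‖X‖ ^ 2 = RCLike.re (X * Xᴴ).trace := by
  rw [← inner_toRowsL2_conjTranspose, ← frobenius_norm_conjTranspose X, ← norm_toRowsL2]
  exact (inner_self_eq_norm_sq _).symm

lemma re_trace_mul_le_frobenius_norm_mul (X : Matrix m n 𝕜) (Y : Matrix n m 𝕜) :
    RCLike.re (X * Y).trace ≤ ‖X‖ * ‖Y‖ := by
  rw [← inner_toRowsL2_conjTranspose, ← frobenius_norm_conjTranspose X]
  exact re_inner_le_norm _ _

lemma frobenius_norm_mul_le_norm_toEuclideanCLM_mul [DecidableEq n]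
    (A : Matrix n n 𝕜) (X : Matrix n p 𝕜) :
    ‖A * X‖ ≤ ‖toEuclideanCLM (𝕜 := 𝕜) A‖ * ‖X‖ := by
  rw [← frobenius_norm_transpose X, ← frobenius_norm_transpose (A * X)]
  refine pow_le_pow_iff_left₀ (norm_nonneg _) (by positivity) two_ne_zero |>.mp ?_
  rw [mul_pow, frobenius_norm_sq_eq_sum_rows, frobenius_norm_sq_eq_sum_rows, Finset.mul_sum]
  gcongr with k
  have hcol : (A * X)ᵀ k = A *ᵥ Xᵀ k := rfl
  rw [hcol, ← toEuclideanCLM_toLp, ← mul_pow]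
  gcongr
  exact (toEuclideanCLM (𝕜 := 𝕜) A).le_opNorm _

end Matrix

section

attribute [local instance] Matrix.frobeniusNormedAddCommGroup

open Matrix

lemma frobenius_norm_mul_le_specNorm_mul {r : ℕ} (A X : Matrix (Fin r) (Fin r) ℂ) :
    ‖A * X‖ ≤ specNorm A * ‖X‖ :=
  frobenius_norm_mul_le_norm_toEuclideanCLM_mul A X

theorem stmt4_general (r : ℕ) (Λ Δ G₁ G₂ : Matrix (Fin r) (Fin r) ℂ) :
    2 * ((Λ * G₁ * Δ * Λ * G₂).trace).re ≤
      Real.sqrt r * specNorm Δ * specNorm Λ ^ 2 *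
        (((G₁ * G₁ᴴ).trace).re + ((G₂ * G₂ᴴ).trace).re) := by
  have hΛ : 0 ≤ specNorm Λ := norm_nonneg _
  have hΔ : 0 ≤ specNorm Δ := norm_nonneg _
  have hbound : 2 * ((Λ * G₁ * Δ * Λ * G₂).trace).re ≤
      specNorm Δ * specNorm Λ ^ 2 * (‖G₁‖ ^ 2 + ‖G₂‖ ^ 2) :=
    calc 2 * ((Λ * G₁ * Δ * Λ * G₂).trace).re
        = 2 * RCLike.re ((Λ * G₁) * (Δ * (Λ * G₂))).trace := by simp only [Matrix.mul_assoc]; rfl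
      _ ≤ 2 * (‖Λ * G₁‖ * ‖Δ * (Λ * G₂)‖) := by grw [re_trace_mul_le_frobenius_norm_mul]
      _ ≤ 2 * ((specNorm Λ * ‖G₁‖) * (specNorm Δ * (specNorm Λ * ‖G₂‖))) := by
        grw [frobenius_norm_mul_le_specNorm_mul Λ G₁, frobenius_norm_mul_le_specNorm_mul Δ,
          frobenius_norm_mul_le_specNorm_mul Λ G₂]
      _ = specNorm Δ * specNorm Λ ^ 2 * (2 * ‖G₁‖ * ‖G₂‖) := by ring
      _ ≤ specNorm Δ * specNorm Λ ^ 2 * (‖G₁‖ ^ 2 + ‖G₂‖ ^ 2) := by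
        grw [two_mul_le_add_sq]
  have hG₁ : ((G₁ * G₁ᴴ).trace).re = ‖G₁‖ ^ 2 :=
    (frobenius_norm_sq_eq_re_trace_mul_conjTranspose G₁).symm
  have hG₂ : ((G₂ * G₂ᴴ).trace).re = ‖G₂‖ ^ 2 :=
    (frobenius_norm_sq_eq_re_trace_mul_conjTranspose G₂).symm
  rw [hG₁, hG₂]
  rcases Nat.eq_zero_or_pos r with rfl | hr
  · simp
  · have hsqrt : 1 ≤ Real.sqrt r := Real.one_le_sqrt.mpr (by exact_mod_cast hr)
    rw [mul_assoc (Real.sqrt r), mul_assoc (Real.sqrt r)]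
    refine hbound.trans (le_mul_of_one_le_left ?_ hsqrt)
    positivity

/-- For `Λ` Hermitian positive semidefinite and arbitrary `Δ, G₁, G₂`:
`2 Re Tr(Λ G₁ Δ Λ G₂) ≤ √r ‖Δ‖₂ ‖Λ‖₂² (Tr(G₁G₁ᴴ) + Tr(G₂G₂ᴴ))`. -/
theorem stmt4 (r : ℕ) (Λ Δ G₁ G₂ : Matrix (Fin r) (Fin r) ℂ)
    (hΛ : Λ.PosSemidef) :
    2 * ((Λ * G₁ * Δ * Λ * G₂).trace).re ≤
      Real.sqrt r * specNorm Δ * specNorm Λ ^ 2 *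
        (((G₁ * G₁ᴴ).trace).re + ((G₂ * G₂ᴴ).trace).re) :=
  stmt4_general r Λ Δ G₁ G₂

end
end

section
/- Fix a real x > 0 and reals λ₁ ≥ ... ≥ λ_r > 0 with x ≤ ∑_{i=1}^r λ_i². Consider the problem of maximizing ∑_{i=1}^r log(1 - p_i) over vectors p with 0 ≤ p_i ≤ 1 for all i and ∑_{i=1}^r λ_i² p_i = x. Then any maximizer p* satisfies p*_1 ≥ p*_2 ≥ ... ≥ p*_r; i.e., the optimal p is sorted in decreasing order (matching the decreasing order of λ_i). -/
open Finset

lemma sum_three {r : ℕ} (G : Fin r → ℝ) {i j : Fin r} (hij : i ≠ j) :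
    ∑ k, G k = G i + G j + ∑ k ∈ (univ.erase i).erase j, G k := by
  rw [← Finset.add_sum_erase _ G (mem_univ i),
    ← Finset.add_sum_erase _ G (Finset.mem_erase.mpr ⟨hij.symm, mem_univ j⟩)]
  ring

/-- Any maximizer of `∑ log(1 - pᵢ)` subject to `0 ≤ pᵢ < 1` and `∑ λᵢ² pᵢ = x`
is sorted in decreasing order (matching the decreasing order of the `λᵢ`). -/
theorem stmt5 (r : ℕ) (lam : Fin r → ℝ) (hpos : ∀ i, 0 < lam i) (hdec : Antitone lam)
    (x : ℝ) (hx : 0 < x) (hxle : x ≤ ∑ i, lam i ^ 2)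
    (p : Fin r → ℝ) (hp : ∀ i, 0 ≤ p i ∧ p i < 1)
    (hfeas : ∑ i, lam i ^ 2 * p i = x)
    (hmax : ∀ q : Fin r → ℝ, (∀ i, 0 ≤ q i ∧ q i < 1) → ∑ i, lam i ^ 2 * q i = x →
      ∑ i, Real.log (1 - q i) ≤ ∑ i, Real.log (1 - p i)) :
    Antitone p := by
  intro i j hij
  by_contra hcon
  push_neg at hcon
  have hne : i ≠ j := by rintro rfl; exact lt_irrefl _ hcon
  have hpi := hp i
  have hpj := hp j
  have hli : 0 < lam i := hpos i
  have hlj : 0 < lam j := hpos j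
  have hle : lam j ≤ lam i := hdec hij
  -- general exchange lemma: for admissible a, b with matching weighted sum and
  -- strictly bigger log-sum, contradiction
  have key : ∀ a b : ℝ, 0 ≤ a → a < 1 → 0 ≤ b → b < 1 →
      lam i ^ 2 * a + lam j ^ 2 * b = lam i ^ 2 * p i + lam j ^ 2 * p j →
      Real.log (1 - p i) + Real.log (1 - p j) < Real.log (1 - a) + Real.log (1 - b) →
      False := by
    intro a b ha0 ha1 hb0 hb1 hsum hlog
    set q : Fin r → ℝ := Function.update (Function.update p i a) j b with hq
    have hqi : q i = a := by
      rw [hq, Function.update_of_ne hne, Function.update_self]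
    have hqj : q j = b := by rw [hq, Function.update_self]
    have hqk : ∀ k, k ∈ (univ.erase i).erase j → q k = p k := by
      intro k hk
      obtain ⟨hkj, hki⟩ : k ≠ j ∧ k ≠ i := by
        simpa [Finset.mem_erase] using hk
      rw [hq, Function.update_of_ne hkj, Function.update_of_ne hki]
    have hqbound : ∀ k, 0 ≤ q k ∧ q k < 1 := by
      intro k
      by_cases h1 : k = j
      · subst h1; rw [hqj]; exact ⟨hb0, hb1⟩
      · by_cases h2 : k = i
        · subst h2; rw [hqi]; exact ⟨ha0, ha1⟩
        · rw [hq, Function.update_of_ne h1, Function.update_of_ne h2]; exact hp k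
    have hc1 : ∑ k ∈ (univ.erase i).erase j, lam k ^ 2 * q k
        = ∑ k ∈ (univ.erase i).erase j, lam k ^ 2 * p k :=
      Finset.sum_congr rfl (fun k hk => by rw [hqk k hk])
    have hc2 : ∑ k ∈ (univ.erase i).erase j, Real.log (1 - q k)
        = ∑ k ∈ (univ.erase i).erase j, Real.log (1 - p k) :=
      Finset.sum_congr rfl (fun k hk => by rw [hqk k hk])
    have hsplit1 : ∑ k, lam k ^ 2 * q k = x := by
      rw [sum_three (fun k => lam k ^ 2 * q k) hne, hqi, hqj, hc1]
      rw [sum_three (fun k => lam k ^ 2 * p k) hne] at hfeas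
      linarith
    have hsplit2 : ∑ k, Real.log (1 - p k) < ∑ k, Real.log (1 - q k) := by
      rw [sum_three (fun k => Real.log (1 - q k)) hne, hqi, hqj, hc2,
        sum_three (fun k => Real.log (1 - p k)) hne]
      linarith
    exact absurd (hmax q hqbound hsplit1) (not_le.mpr hsplit2)
  rcases eq_or_lt_of_le hle with heq | hlt
  · -- equal weights: replace both by the average, strictly better by strict concavity
    set m : ℝ := (p i + p j) / 2 with hm
    have hm0 : 0 ≤ m := by rw [hm]; linarith [hpi.1, hpj.1]
    have hm1 : m < 1 := by rw [hm]; linarith [hpi.2, hpj.2]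
    refine key m m hm0 hm1 hm0 hm1 (by rw [heq, hm]; ring) ?_
    have hu : (0:ℝ) < 1 - p i := by linarith [hpi.2]
    have hv : (0:ℝ) < 1 - p j := by linarith [hpj.2]
    have hprod : (1 - p i) * (1 - p j) < (1 - m) ^ 2 := by
      have hd : 0 < p j - p i := by linarith
      have := mul_pos hd hd
      rw [hm]; nlinarith
    have h1 : Real.log ((1 - p i) * (1 - p j)) < Real.log ((1 - m) ^ 2) :=
      Real.log_lt_log (by positivity) hprod
    rw [Real.log_mul (ne_of_gt hu) (ne_of_gt hv), Real.log_pow] at h1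
    push_cast at h1
    linarith
  · -- strict weights: move mass from j to i
    have hsq : lam j ^ 2 < lam i ^ 2 := by nlinarith
    set c : ℝ := lam j ^ 2 / lam i ^ 2 with hc
    have hc0 : 0 < c := by positivity
    have hc1 : c < 1 := (div_lt_one (by positivity)).mpr hsq
    set a : ℝ := p i + c * (p j - p i) with ha
    have hapi : p i < a := by rw [ha]; nlinarith
    have hapj : a < p j := by rw [ha]; nlinarith
    refine key a (p i) (le_trans hpi.1 hapi.le) (lt_trans hapj hpj.2) hpi.1 hpi.2 ?_ ?_
    · rw [ha, hc]
      field_simp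
      ring
    · have : Real.log (1 - p j) < Real.log (1 - a) :=
        Real.log_lt_log (by linarith [hpj.2]) (by linarith)
      linarith
end

section
/- Fix reals λ₁ > λ₂ > ... > λ_r > 0 and x with 0 < x ≤ ∑_{i=1}^r λ_i². Let s = s(x) be the unique index k ∈ {1,...,r} such that x lies in the interval I_k = ( ∑_{i=1}^k (λ_i² - λ_k²), ∑_{i=1}^{k+1}(λ_i² - λ_{k+1}²) ] (with the convention λ_{r+1} = 0). Define p*_i = 1 - (∑_{j=1}^s λ_j² - x)/(s λ_i²) for i ≤ s and p*_i = 0 for i > s. Then p* is feasible: 0 ≤ p*_i ≤ 1 for all i and ∑_i λ_i² p*_i = x. -/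
/-!
With `S = ∑_{j ≤ s} λⱼ²`, the point is `p*ᵢ = 1 - c / λᵢ²` on the first `s + 1` coordinates,
where `c = (S - x)/(s + 1)` is the common amount removed from each `λᵢ² p*ᵢ`; hence
`∑ λᵢ² p*ᵢ = S - (s + 1) c = x`. The right end of `I_s` says `S - x ≥ (s + 1) λ_{s+1}² ≥ 0`,
and the left end says `S - x < (s + 1) λ_s² ≤ (s + 1) λᵢ²`, so `0 ≤ c / λᵢ² ≤ 1`.
-/

open Finset

noncomputable def waterFilling (lam : ℕ → ℝ) (s : ℕ) (x : ℝ) (i : ℕ) : ℝ :=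
  if i ≤ s then 1 - (∑ j ∈ range (s + 1), lam j ^ 2 - x) / ((s + 1 : ℝ) * lam i ^ 2) else 0

lemma sum_range_sub_const (f : ℕ → ℝ) (n : ℕ) (c : ℝ) :
    ∑ i ∈ range n, (f i - c) = ∑ i ∈ range n, f i - n * c := by
  rw [sum_sub_distrib, sum_const, card_range, nsmul_eq_mul]

section WaterFilling

variable {lam : ℕ → ℝ} {s : ℕ} {x : ℝ}

lemma sum_sq_sub_nonneg_of_le (hx : x ≤ ∑ i ∈ range (s + 2), (lam i ^ 2 - lam (s + 1) ^ 2)) :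
    0 ≤ ∑ j ∈ range (s + 1), lam j ^ 2 - x := by
  rw [sum_range_sub_const, sum_range_succ] at hx
  push_cast at hx
  nlinarith [sq_nonneg (lam (s + 1)), (s.cast_nonneg : (0 : ℝ) ≤ s)]

lemma sum_sq_sub_lt_of_lt (hx : ∑ i ∈ range (s + 1), (lam i ^ 2 - lam s ^ 2) < x) :
    ∑ j ∈ range (s + 1), lam j ^ 2 - x < (s + 1 : ℝ) * lam s ^ 2 := by
  rw [sum_range_sub_const] at hx
  push_cast at hx
  linarith

lemma waterFilling_of_lt {i : ℕ} (hi : s < i) : waterFilling lam s x i = 0 :=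
  if_neg hi.not_ge

lemma sq_mul_waterFilling {i : ℕ} (hi : i ≤ s) (hlam : lam i ≠ 0) :
    lam i ^ 2 * waterFilling lam s x i
      = lam i ^ 2 - (∑ j ∈ range (s + 1), lam j ^ 2 - x) / (s + 1 : ℝ) := by
  rw [waterFilling, if_pos hi]
  field_simp

lemma sum_sq_mul_waterFilling {r : ℕ} (hs : s < r) (hlam : ∀ i ≤ s, lam i ≠ 0) :
    ∑ i ∈ range r, lam i ^ 2 * waterFilling lam s x i = x := by
  have htail : ∑ i ∈ Ico (s + 1) r, lam i ^ 2 * waterFilling lam s x i = 0 :=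
    sum_eq_zero fun i hi => by rw [waterFilling_of_lt (mem_Ico.mp hi).1, mul_zero]
  rw [← sum_range_add_sum_Ico _ hs, htail, add_zero,
    sum_congr rfl fun i hi => sq_mul_waterFilling (Nat.lt_succ_iff.mp (mem_range.mp hi))
      (hlam i (Nat.lt_succ_iff.mp (mem_range.mp hi))),
    sum_range_sub_const]
  push_cast
  field_simp
  ring

lemma waterFilling_mem_Icc {i : ℕ} (hi : i ≤ s) (hlam : 0 < lam i) (hle : lam s ^ 2 ≤ lam i ^ 2)
    (h0 : 0 ≤ ∑ j ∈ range (s + 1), lam j ^ 2 - x)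
    (h1 : ∑ j ∈ range (s + 1), lam j ^ 2 - x < (s + 1 : ℝ) * lam s ^ 2) :
    waterFilling lam s x i ∈ Set.Icc 0 1 := by
  have hden : 0 < (s + 1 : ℝ) * lam i ^ 2 := by positivity
  rw [waterFilling, if_pos hi, Set.mem_Icc, sub_nonneg, div_le_one hden, sub_le_self_iff]
  exact ⟨h1.le.trans (by gcongr), div_nonneg h0 hden.le⟩

end WaterFilling

theorem stmt6_general (r s : ℕ) (lam : ℕ → ℝ)
    (hpos : ∀ i, i < r → 0 < lam i)
    (hdec : ∀ i j, i < j → j < r → lam j < lam i)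
    (x : ℝ)
    (hs : s < r)
    (hx1 : ∑ i ∈ range (s + 1), (lam i ^ 2 - lam s ^ 2) < x)
    (hx2 : x ≤ ∑ i ∈ range (s + 2), (lam i ^ 2 - lam (s + 1) ^ 2))
    (p : ℕ → ℝ)
    (hp : ∀ i, p i = if i ≤ s then
        1 - (∑ j ∈ range (s + 1), lam j ^ 2 - x) / ((s + 1 : ℝ) * lam i ^ 2) else 0) :
    (∀ i, i < r → 0 ≤ p i ∧ p i ≤ 1) ∧ ∑ i ∈ range r, lam i ^ 2 * p i = x := by
  obtain rfl : p = waterFilling lam s x := funext hp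
  refine ⟨fun i hi => ?_, sum_sq_mul_waterFilling hs fun i hi => (hpos i (by omega)).ne'⟩
  rcases le_or_gt i s with his | hsi
  · have hle : lam s ≤ lam i := his.eq_or_lt.elim (fun h => h ▸ le_rfl) fun h => (hdec i s h hs).le
    exact waterFilling_mem_Icc his (hpos i hi) (pow_le_pow_left₀ (hpos s hs).le hle 2)
      (sum_sq_sub_nonneg_of_le hx2) (sum_sq_sub_lt_of_lt hx1)
  · simp only [waterFilling_of_lt hsi, le_refl, zero_le_one, and_self]

/-- Feasibility of the water-filling point: with `s` (0-indexed) the index such that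
`x ∈ I_s`, the point `p*ᵢ = 1 - (∑_{j ≤ s} λⱼ² - x)/((s+1) λᵢ²)` for `i ≤ s`,
`p*ᵢ = 0` otherwise, satisfies `0 ≤ p*ᵢ ≤ 1` and `∑ᵢ λᵢ² p*ᵢ = x`. -/
theorem stmt6 (r s : ℕ) (lam : ℕ → ℝ)
    (hpos : ∀ i, i < r → 0 < lam i)
    (hdec : ∀ i j, i < j → j < r → lam j < lam i)
    (hzero : ∀ i, r ≤ i → lam i = 0)
    (x : ℝ) (hx : 0 < x) (hxle : x ≤ ∑ i ∈ range r, lam i ^ 2)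
    (hs : s < r)
    (hx1 : ∑ i ∈ range (s + 1), (lam i ^ 2 - lam s ^ 2) < x)
    (hx2 : x ≤ ∑ i ∈ range (s + 2), (lam i ^ 2 - lam (s + 1) ^ 2))
    (p : ℕ → ℝ)
    (hp : ∀ i, p i = if i ≤ s then
        1 - (∑ j ∈ range (s + 1), lam j ^ 2 - x) / ((s + 1 : ℝ) * lam i ^ 2) else 0) :
    (∀ i, i < r → 0 ≤ p i ∧ p i ≤ 1) ∧ ∑ i ∈ range r, lam i ^ 2 * p i = x :=
  stmt6_general r s lam hpos hdec x hs hx1 hx2 p hp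
end

section
/- Fix reals λ₁ > ... > λ_r > 0 and x ∈ (0, ∑_i λ_i²]. For every vector p with 0 ≤ p_i < 1 and ∑_{i=1}^r λ_i² p_i = x, one has ∑_{i=1}^r log(1 - p_i) ≤ J_Λ(x), where J_Λ(x) = log( [ (∑_{i=1}^{s} λ_i² - x)/s ]^{s} / ∏_{i=1}^{s} λ_i² ) and s = s(x) is the index k with x ∈ I_k. -/
/-!
Weak Lagrangian duality with multiplier `1/μ`, where `μ = (∑_{i ≤ s} λᵢ² - x)/(s+1)` is the
water level. By concavity of `log`, `log (1 - pᵢ) + λᵢ² pᵢ / μ ≤ log (μ / λᵢ²) + λᵢ² / μ - 1`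
for every `i`; for `i > s` the sharper bound `≤ 0` holds because `λᵢ² ≤ λ_{s+1}² ≤ μ`, the last
inequality being the upper half of `x ∈ I_s`. Summing, the multiplier terms cancel against the
constraint `∑ λᵢ² pᵢ = x = ∑_{i ≤ s} λᵢ² - (s+1) μ`, leaving
`∑ log (1 - pᵢ) ≤ ∑_{i ≤ s} log (μ / λᵢ²)`.
-/

open Finset Real

lemma log_one_sub_add_mul_div_le {μ w p : ℝ} (hμ : 0 < μ) (hw : 0 < w) (hp : p < 1) :
    log (1 - p) + w * p / μ ≤ log (μ / w) + (w - μ) / μ := by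
  have hq : 0 < 1 - p := sub_pos.2 hp
  have h := log_le_sub_one_of_pos (div_pos (mul_pos hw hq) hμ)
  rw [log_div (mul_pos hw hq).ne' hμ.ne', log_mul hw.ne' hq.ne'] at h
  rw [log_div hμ.ne' hw.ne']
  have : w * (1 - p) / μ - 1 = (w - μ) / μ - w * p / μ := by field_simp; ring
  linarith

lemma log_one_sub_add_mul_div_nonpos {μ w p : ℝ} (hμ : 0 < μ) (hw : w ≤ μ) (hp₀ : 0 ≤ p)
    (hp₁ : p < 1) : log (1 - p) + w * p / μ ≤ 0 := by
  have hlog := log_le_sub_one_of_pos (sub_pos.2 hp₁)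
  have : w * p / μ ≤ p := by rw [div_le_iff₀ hμ]; nlinarith
  linarith

theorem sum_log_one_sub_le_of_level {m r : ℕ} (hmr : m ≤ r) {w p : ℕ → ℝ} {μ : ℝ} (hμ : 0 < μ)
    (hw : ∀ i < m, 0 < w i) (hwμ : ∀ i ∈ Ico m r, w i ≤ μ) (hp : ∀ i < r, 0 ≤ p i ∧ p i < 1)
    (hlevel : ∑ i ∈ range r, w i * p i = ∑ i ∈ range m, w i - m * μ) :
    ∑ i ∈ range r, log (1 - p i) ≤ ∑ i ∈ range m, log (μ / w i) := by
  have key : ∑ i ∈ range r, (log (1 - p i) + w i * p i / μ) ≤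
      ∑ i ∈ range m, (log (μ / w i) + (w i - μ) / μ) := by
    rw [← sum_range_add_sum_Ico _ hmr]
    refine (add_le_add (sum_le_sum fun i hi => ?_) (sum_nonpos fun i hi => ?_)).trans_eq
      (add_zero _)
    · have hi := mem_range.1 hi
      exact log_one_sub_add_mul_div_le hμ (hw i hi) (hp i (by omega)).2
    · have hir := (mem_Ico.1 hi).2
      exact log_one_sub_add_mul_div_nonpos hμ (hwμ i hi) (hp i hir).1 (hp i hir).2
  rw [sum_add_distrib, sum_add_distrib, ← sum_div, ← sum_div, hlevel, sum_sub_distrib,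
    sum_const, card_range, nsmul_eq_mul] at key
  linarith

lemma log_pow_card_div_prod {ι : Type*} (t : Finset ι) {μ : ℝ} {w : ι → ℝ} (hμ : μ ≠ 0)
    (hw : ∀ i ∈ t, w i ≠ 0) : log (μ ^ #t / ∏ i ∈ t, w i) = ∑ i ∈ t, log (μ / w i) := by
  rw [← prod_const, ← prod_div_distrib, log_prod]
  exact fun i hi => div_ne_zero hμ (hw i hi)

lemma sum_range_succ_sub_last {M : Type*} [CommRing M] (a : ℕ → M) (n : ℕ) :
    ∑ i ∈ range (n + 1), (a i - a n) = ∑ i ∈ range n, a i - n * a n := by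
  simp only [sum_range_succ, sum_sub_distrib, sum_const, card_range, nsmul_eq_mul]
  push_cast
  ring

lemma sq_le_sq_of_antitone_on_range {r : ℕ} {lam : ℕ → ℝ} (hpos : ∀ i, i < r → 0 < lam i)
    (hdec : ∀ i j, i < j → j < r → lam j < lam i) {i j : ℕ} (hij : i ≤ j) (hj : j < r) :
    lam j ^ 2 ≤ lam i ^ 2 := by
  refine pow_le_pow_left₀ (hpos j hj).le ?_ 2
  rcases hij.eq_or_lt with rfl | hlt
  · exact le_rfl
  · exact (hdec i j hlt hj).le

theorem stmt8_general (r s : ℕ) (lam : ℕ → ℝ)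
    (hpos : ∀ i, i < r → 0 < lam i)
    (hdec : ∀ i j, i < j → j < r → lam j < lam i)
    (x : ℝ)
    (hs : s < r)
    (hx2 : x ≤ ∑ i ∈ range (s + 2), (lam i ^ 2 - lam (s + 1) ^ 2))
    (p : ℕ → ℝ)
    (hp : ∀ i, i < r → 0 ≤ p i ∧ p i < 1)
    (hfeas : ∑ i ∈ range r, lam i ^ 2 * p i = x) :
    ∑ i ∈ range r, Real.log (1 - p i) ≤
      Real.log ((((∑ j ∈ range (s + 1), lam j ^ 2 - x) / (s + 1 : ℝ)) ^ (s + 1)) /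
        ∏ j ∈ range (s + 1), lam j ^ 2) := by
  set μ := (∑ j ∈ range (s + 1), lam j ^ 2 - x) / (s + 1 : ℝ) with hμ
  have hlevel : ∑ j ∈ range (s + 1), lam j ^ 2 - x = (s + 1 : ℝ) * μ := by
    rw [hμ]; field_simp
  have hμ_ge : lam (s + 1) ^ 2 ≤ μ := by
    rw [sum_range_succ_sub_last (fun i => lam i ^ 2)] at hx2
    push_cast at hx2
    rw [hμ, le_div_iff₀ (by positivity)]
    linarith
  rcases ((sq_nonneg _).trans hμ_ge).eq_or_lt with hμ0 | hμpos
  · rw [← hμ0, zero_pow (Nat.succ_ne_zero s), zero_div, log_zero]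
    exact sum_nonpos fun i hi => log_nonpos (by linarith [hp i (mem_range.1 hi)])
      (by linarith [hp i (mem_range.1 hi)])
  have hlog := log_pow_card_div_prod (range (s + 1)) hμpos.ne' (w := fun j => lam j ^ 2)
    fun j hj => (pow_pos (hpos j (by have := mem_range.1 hj; omega)) 2).ne'
  rw [card_range] at hlog
  rw [hlog]
  refine sum_log_one_sub_le_of_level hs hμpos (fun i hi => pow_pos (hpos i (by omega)) 2)
    (fun i hi => ?_) hp (by rw [hfeas]; push_cast; linarith)
  obtain ⟨his, hir⟩ := mem_Ico.1 hi
  exact (sq_le_sq_of_antitone_on_range hpos hdec his hir).trans hμ_ge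

/-- Water-filling optimum: every feasible `p` (with `0 ≤ pᵢ < 1`, `∑ λᵢ² pᵢ = x`) satisfies
`∑ log(1 - pᵢ) ≤ J_Λ(x)`, where `s` (0-indexed) is the index with `x ∈ I_s` and
`J_Λ(x) = log( [ (∑_{i ≤ s} λᵢ² - x)/(s+1) ]^(s+1) / ∏_{i ≤ s} λᵢ² )`. -/
theorem stmt8 (r s : ℕ) (lam : ℕ → ℝ)
    (hpos : ∀ i, i < r → 0 < lam i)
    (hdec : ∀ i j, i < j → j < r → lam j < lam i)
    (hzero : ∀ i, r ≤ i → lam i = 0)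
    (x : ℝ) (hx : 0 < x) (hxle : x ≤ ∑ i ∈ range r, lam i ^ 2)
    (hs : s < r)
    (hx1 : ∑ i ∈ range (s + 1), (lam i ^ 2 - lam s ^ 2) < x)
    (hx2 : x ≤ ∑ i ∈ range (s + 2), (lam i ^ 2 - lam (s + 1) ^ 2))
    (p : ℕ → ℝ)
    (hp : ∀ i, i < r → 0 ≤ p i ∧ p i < 1)
    (hfeas : ∑ i ∈ range r, lam i ^ 2 * p i = x) :
    ∑ i ∈ range r, Real.log (1 - p i) ≤
      Real.log ((((∑ j ∈ range (s + 1), lam j ^ 2 - x) / (s + 1 : ℝ)) ^ (s + 1)) /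
        ∏ j ∈ range (s + 1), lam j ^ 2) :=
  stmt8_general r s lam hpos hdec x hs hx2 p hp hfeas
end

section
/- Let Λ = diag(λ₁,...,λ_r) with λ_i > 0, μ > 0, and suppose complex r×r matrices ψ₁, ψ₂ with ‖ψ_i‖₂ < 1 satisfy the stationarity equations μ Λ ψ₂ Λ = ψ₁* (I − ψ₁ ψ₁*)^{-1} and μ Λ ψ₁ Λ = ψ₂* (I − ψ₂ ψ₂*)^{-1}. Then ψ₁* ψ₁ and ψ₂* ψ₂ commute with Λ², and moreover ψ₂* ψ₂ = ψ₁ ψ₁* and ψ₁* ψ₁ = ψ₂ ψ₂*. -/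
set_option synthInstance.maxHeartbeats 1000000
set_option maxHeartbeats 1000000

open Finset
open scoped Matrix

private lemma norm_star' {r : ℕ} (T : EuclideanSpace ℂ (Fin r) →L[ℂ] EuclideanSpace ℂ (Fin r)) :
    ‖star T‖ = ‖T‖ := by
  rw [ContinuousLinearMap.star_eq_adjoint]
  exact LinearIsometryEquiv.norm_map _ T

private lemma specNorm_conjTranspose {r : ℕ} (ψ : Matrix (Fin r) (Fin r) ℂ) :
    specNorm ψᴴ = specNorm ψ := by
  unfold specNorm
  rw [← Matrix.star_eq_conjTranspose, map_star]
  exact norm_star' _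

private lemma unit_aux {r : ℕ} (ψ : Matrix (Fin r) (Fin r) ℂ) (h : specNorm ψ < 1) :
    IsUnit (1 - ψ * ψᴴ).det := by
  rw [← Matrix.isUnit_iff_isUnit_det]
  set e := Matrix.toEuclideanCLM (𝕜 := ℂ) (n := Fin r) with he
  have h' : ‖e ψ‖ < 1 := h
  have hn : (0:ℝ) ≤ ‖e ψ‖ := norm_nonneg _
  have h2 : ‖e ψ * star (e ψ)‖ < 1 := by
    refine lt_of_le_of_lt (norm_mul_le _ _) ?_
    rw [norm_star' (e ψ)]
    nlinarith [h', hn]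
  have hu : IsUnit (e (1 - ψ * ψᴴ)) := by
    rw [map_sub, map_one, map_mul, ← Matrix.star_eq_conjTranspose, map_star]
    exact (Units.oneSub _ h2).isUnit
  have := hu.map e.symm
  simpa using this

private lemma unit_aux' {r : ℕ} (ψ : Matrix (Fin r) (Fin r) ℂ) (h : specNorm ψ < 1) :
    IsUnit (1 - ψᴴ * ψ).det := by
  have := unit_aux ψᴴ (by rwa [specNorm_conjTranspose])
  simpa using this

private lemma commute_inv {r : ℕ} {M N : Matrix (Fin r) (Fin r) ℂ}
    (h : Commute M N) (hN : IsUnit N.det) : Commute M N⁻¹ := by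
  have h1 : N * N⁻¹ = 1 := Matrix.mul_nonsing_inv N hN
  have h2 : N⁻¹ * N = 1 := Matrix.nonsing_inv_mul N hN
  show M * N⁻¹ = N⁻¹ * M
  calc M * N⁻¹ = N⁻¹ * (N * M) * N⁻¹ := by rw [← mul_assoc, h2, one_mul]
    _ = N⁻¹ * (M * N) * N⁻¹ := by rw [h.eq]
    _ = N⁻¹ * M * (N * N⁻¹) := by rw [← mul_assoc, mul_assoc (N⁻¹ * M)]
    _ = N⁻¹ * M := by rw [h1, mul_one]

/-- push-through identity -/
private lemma pushthrough {r : ℕ} (B : Matrix (Fin r) (Fin r) ℂ)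
    (hP : IsUnit (1 - B * Bᴴ).det) (hQ : IsUnit (1 - Bᴴ * B).det) :
    (1 - B * Bᴴ)⁻¹ * B = B * (1 - Bᴴ * B)⁻¹ := by
  have key : (1 - B * Bᴴ) * B = B * (1 - Bᴴ * B) := by noncomm_ring
  have h1 : (1 - B * Bᴴ)⁻¹ * (1 - B * Bᴴ) = 1 := Matrix.nonsing_inv_mul _ hP
  have h2 : (1 - Bᴴ * B) * (1 - Bᴴ * B)⁻¹ = 1 := Matrix.mul_nonsing_inv _ hQ
  have h3 := congrArg (fun X => (1 - B * Bᴴ)⁻¹ * X * (1 - Bᴴ * B)⁻¹) key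
  simp only [← mul_assoc] at h3
  rw [h1, one_mul] at h3
  rw [mul_assoc ((1 - B * Bᴴ)⁻¹ * B), h2, mul_one] at h3
  exact h3.symm

private lemma f_eq {r : ℕ} (X : Matrix (Fin r) (Fin r) ℂ) (h : IsUnit (1 - X).det) :
    X * (1 - X)⁻¹ = (1 - X)⁻¹ - 1 := by
  have hc : Commute X (1 - X)⁻¹ :=
    commute_inv ((Commute.one_right X).sub_right (Commute.refl X)) h
  have h1 : (1 - X)⁻¹ * (1 - X) = 1 := Matrix.nonsing_inv_mul _ h
  calc X * (1 - X)⁻¹ = (1 - X)⁻¹ * X := hc.eq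
    _ = (1 - X)⁻¹ * 1 - (1 - X)⁻¹ * (1 - X) := by rw [← mul_sub, sub_sub_cancel]
    _ = (1 - X)⁻¹ - 1 := by rw [mul_one, h1]

private lemma f_inj {r : ℕ} {X Y : Matrix (Fin r) (Fin r) ℂ}
    (hX : IsUnit (1 - X).det) (hY : IsUnit (1 - Y).det)
    (h : X * (1 - X)⁻¹ = Y * (1 - Y)⁻¹) : X = Y := by
  rw [f_eq X hX, f_eq Y hY] at h
  have h2 : (1 - X)⁻¹ = (1 - Y)⁻¹ := sub_left_inj.mp h
  have h3 : (1 - X) = (1 - Y) := by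
    rw [← Matrix.nonsing_inv_nonsing_inv _ hX, h2, Matrix.nonsing_inv_nonsing_inv _ hY]
  exact sub_right_inj.mp h3

private lemma f_herm {r : ℕ} (X : Matrix (Fin r) (Fin r) ℂ) (hX : Xᴴ = X)
    (h : IsUnit (1 - X).det) : (X * (1 - X)⁻¹)ᴴ = X * (1 - X)⁻¹ := by
  have hc : Commute X (1 - X)⁻¹ :=
    commute_inv ((Commute.one_right X).sub_right (Commute.refl X)) h
  have h1 : (1 - X)ᴴ = 1 - X := by
    rw [Matrix.conjTranspose_sub, Matrix.conjTranspose_one, hX]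
  rw [Matrix.conjTranspose_mul, Matrix.conjTranspose_nonsing_inv, hX, h1]
  exact hc.eq.symm

/-- commuting with diag(λ)² implies commuting with diag(λ), for positive λ -/
private lemma diag_commute {r : ℕ} (lam : Fin r → ℝ) (hpos : ∀ i, 0 < lam i)
    (M : Matrix (Fin r) (Fin r) ℂ)
    (h : M * (Matrix.diagonal fun i => (lam i : ℂ)) ^ 2
       = (Matrix.diagonal fun i => (lam i : ℂ)) ^ 2 * M) :
    M * (Matrix.diagonal fun i => (lam i : ℂ))
      = (Matrix.diagonal fun i => (lam i : ℂ)) * M := by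
  have hd : (Matrix.diagonal fun i => (lam i : ℂ)) ^ 2
      = Matrix.diagonal fun i => ((lam i : ℂ))^2 := by
    rw [sq, Matrix.diagonal_mul_diagonal]
    refine congrArg Matrix.diagonal (funext fun i => ?_)
    rw [sq]
  rw [hd] at h
  ext i j
  have hij := congrFun (congrFun h i) j
  simp only [Matrix.mul_diagonal, Matrix.diagonal_mul] at hij ⊢
  rcases eq_or_ne (lam i) (lam j) with he | hne
  · rw [he]; ring
  · have hz : ((lam j : ℂ))^2 - ((lam i : ℂ))^2 ≠ 0 := by
      intro hc
      have h4 : (lam j)^2 = (lam i)^2 := by exact_mod_cast sub_eq_zero.mp hc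
      have := abs_eq_abs.mpr (Or.inl (by nlinarith [hpos i, hpos j] : lam j = lam i))
      exact hne (by nlinarith [hpos i, hpos j])
    have h5 : M i j * (((lam j : ℂ))^2 - ((lam i : ℂ))^2) = 0 := by
      linear_combination hij
    rcases mul_eq_zero.mp h5 with h6 | h6
    · rw [h6]; ring
    · exact absurd h6 hz

private lemma key {r : ℕ} (lam : Fin r → ℝ) (hpos : ∀ i, 0 < lam i)
    (Λ : Matrix (Fin r) (Fin r) ℂ) (hΛ : Λ = Matrix.diagonal fun i => (lam i : ℂ))
    (μ : ℝ) (hμ : 0 < μ) (A B : Matrix (Fin r) (Fin r) ℂ)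
    (hA : specNorm A < 1) (hB : specNorm B < 1)
    (heq1 : (μ : ℂ) • (Λ * B * Λ) = Aᴴ * (1 - A * Aᴴ)⁻¹)
    (heq2 : (μ : ℂ) • (Λ * A * Λ) = Bᴴ * (1 - B * Bᴴ)⁻¹) :
    Bᴴ * B = A * Aᴴ ∧ Commute (Bᴴ * B) (Λ ^ 2) := by
  have uP : IsUnit (1 - A * Aᴴ).det := unit_aux A hA
  have uQ : IsUnit (1 - B * Bᴴ).det := unit_aux B hB
  have uQ' : IsUnit (1 - Bᴴ * B).det := unit_aux' B hB
  have hΛH : Λᴴ = Λ := by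
    rw [hΛ, Matrix.diagonal_conjTranspose]
    refine congrArg Matrix.diagonal (funext fun i => ?_)
    simp [Function.comp, Complex.conj_ofReal]
  have hΛdet : IsUnit Λ.det := by
    rw [hΛ, Matrix.det_diagonal]
    refine isUnit_iff_ne_zero.mpr (prod_ne_zero_iff.mpr fun i _ => ?_)
    exact_mod_cast (hpos i).ne'
  have hQH : (Bᴴ * B)ᴴ = Bᴴ * B := by
    rw [Matrix.conjTranspose_mul, Matrix.conjTranspose_conjTranspose]
  have hPH : (A * Aᴴ)ᴴ = A * Aᴴ := by
    rw [Matrix.conjTranspose_mul, Matrix.conjTranspose_conjTranspose]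
  -- F1 : μ • (Λ A Λ B) = f(BᴴB)
  have F1 : (μ : ℂ) • (Λ * A * Λ * B) = (Bᴴ * B) * (1 - Bᴴ * B)⁻¹ := by
    have h := congrArg (· * B) heq2
    simp only [Matrix.smul_mul] at h
    rw [h, mul_assoc, pushthrough B uQ uQ', ← mul_assoc]
  -- F4 : μ • (A Λ B Λ) = f(AAᴴ)
  have F4 : (μ : ℂ) • (A * (Λ * B * Λ)) = (A * Aᴴ) * (1 - A * Aᴴ)⁻¹ := by
    have h := congrArg (A * ·) heq1
    simp only [Matrix.mul_smul] at h
    rw [h, ← mul_assoc]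
  -- G1 : f(BᴴB) Λ = Λ f(AAᴴ)
  have G1 : (Bᴴ * B) * (1 - Bᴴ * B)⁻¹ * Λ = Λ * ((A * Aᴴ) * (1 - A * Aᴴ)⁻¹) := by
    rw [← F1, ← F4, Matrix.smul_mul, Matrix.mul_smul]
    congr 1
    noncomm_ring
  -- G1' : Λ f(BᴴB) = f(AAᴴ) Λ  (conjugate transpose of G1)
  have G1' : Λ * ((Bᴴ * B) * (1 - Bᴴ * B)⁻¹) = (A * Aᴴ) * (1 - A * Aᴴ)⁻¹ * Λ := by
    have h := congrArg Matrix.conjTranspose G1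
    rw [Matrix.conjTranspose_mul, f_herm _ hQH uQ', Matrix.conjTranspose_mul,
      f_herm _ hPH uP, hΛH] at h
    exact h
  -- f(BᴴB) commutes with Λ²
  have hcomm2 : (Bᴴ * B) * (1 - Bᴴ * B)⁻¹ * Λ ^ 2
      = Λ ^ 2 * ((Bᴴ * B) * (1 - Bᴴ * B)⁻¹) := by
    calc (Bᴴ * B) * (1 - Bᴴ * B)⁻¹ * Λ ^ 2
        = (Bᴴ * B) * (1 - Bᴴ * B)⁻¹ * Λ * Λ := by rw [pow_two, ← mul_assoc]
      _ = Λ * ((A * Aᴴ) * (1 - A * Aᴴ)⁻¹) * Λ := by rw [G1]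
      _ = Λ * ((A * Aᴴ) * (1 - A * Aᴴ)⁻¹ * Λ) := by rw [mul_assoc]
      _ = Λ * (Λ * ((Bᴴ * B) * (1 - Bᴴ * B)⁻¹)) := by rw [← G1']
      _ = Λ ^ 2 * ((Bᴴ * B) * (1 - Bᴴ * B)⁻¹) := by rw [pow_two, ← mul_assoc]
  -- hence with Λ
  have hcommΛ : (Bᴴ * B) * (1 - Bᴴ * B)⁻¹ * Λ = Λ * ((Bᴴ * B) * (1 - Bᴴ * B)⁻¹) := by
    rw [hΛ]
    refine diag_commute lam hpos _ ?_
    rw [← hΛ]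
    exact hcomm2
  -- f(BᴴB) = f(AAᴴ)
  have hfQP : (Bᴴ * B) * (1 - Bᴴ * B)⁻¹ = (A * Aᴴ) * (1 - A * Aᴴ)⁻¹ := by
    have h := hcommΛ.symm.trans G1
    calc (Bᴴ * B) * (1 - Bᴴ * B)⁻¹
        = Λ⁻¹ * (Λ * ((Bᴴ * B) * (1 - Bᴴ * B)⁻¹)) := by
          rw [← mul_assoc, Matrix.nonsing_inv_mul _ hΛdet, one_mul]
      _ = Λ⁻¹ * (Λ * ((A * Aᴴ) * (1 - A * Aᴴ)⁻¹)) := by rw [h]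
      _ = (A * Aᴴ) * (1 - A * Aᴴ)⁻¹ := by
          rw [← mul_assoc, Matrix.nonsing_inv_mul _ hΛdet, one_mul]
  refine ⟨f_inj uQ' uP hfQP, ?_⟩
  -- Commute (BᴴB) Λ² from Commute f(BᴴB) Λ
  have c1 : Commute ((Bᴴ * B) * (1 - Bᴴ * B)⁻¹) Λ := hcommΛ
  have c2 : Commute ((1 - Bᴴ * B)⁻¹) Λ := by
    have he : (1 - Bᴴ * B)⁻¹ = (Bᴴ * B) * (1 - Bᴴ * B)⁻¹ + 1 := by
      rw [f_eq _ uQ']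
      abel
    rw [he]
    exact c1.add_left (Commute.one_left Λ)
  have c3 : Commute (1 - Bᴴ * B) Λ := by
    have h := commute_inv c2.symm (Matrix.isUnit_nonsing_inv_det _ uQ')
    rw [Matrix.nonsing_inv_nonsing_inv _ uQ'] at h
    exact h.symm
  have c4 : Commute (Bᴴ * B) Λ := by
    have he : Bᴴ * B = 1 - (1 - Bᴴ * B) := by abel
    rw [he]
    exact (Commute.one_left Λ).sub_left c3
  exact c4.pow_right 2

/-- Consequences of the Lagrangian stationarity equations
`μ Λ ψ₂ Λ = ψ₁* (I - ψ₁ψ₁*)⁻¹` and `μ Λ ψ₁ Λ = ψ₂* (I - ψ₂ψ₂*)⁻¹`: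
`ψᵢ* ψᵢ` commutes with `Λ²`, and `ψ₂*ψ₂ = ψ₁ψ₁*`, `ψ₁*ψ₁ = ψ₂ψ₂*`. -/
theorem stmt18 (r : ℕ) (lam : Fin r → ℝ) (hpos : ∀ i, 0 < lam i)
    (Λ : Matrix (Fin r) (Fin r) ℂ) (hΛ : Λ = Matrix.diagonal fun i => (lam i : ℂ))
    (μ : ℝ) (hμ : 0 < μ) (ψ₁ ψ₂ : Matrix (Fin r) (Fin r) ℂ)
    (h1 : specNorm ψ₁ < 1) (h2 : specNorm ψ₂ < 1)
    (heq1 : (μ : ℂ) • (Λ * ψ₂ * Λ) = ψ₁ᴴ * (1 - ψ₁ * ψ₁ᴴ)⁻¹)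
    (heq2 : (μ : ℂ) • (Λ * ψ₁ * Λ) = ψ₂ᴴ * (1 - ψ₂ * ψ₂ᴴ)⁻¹) :
    Commute (ψ₁ᴴ * ψ₁) (Λ ^ 2) ∧ Commute (ψ₂ᴴ * ψ₂) (Λ ^ 2) ∧
      ψ₂ᴴ * ψ₂ = ψ₁ * ψ₁ᴴ ∧ ψ₁ᴴ * ψ₁ = ψ₂ * ψ₂ᴴ := by
  obtain ⟨e1, c1⟩ := key lam hpos Λ hΛ μ hμ ψ₁ ψ₂ h1 h2 heq1 heq2
  obtain ⟨e2, c2⟩ := key lam hpos Λ hΛ μ hμ ψ₂ ψ₁ h2 h1 heq2 heq1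
  exact ⟨c2, c1, e1, e2⟩
end
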